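/- arXiv:2111.06776 — 4 statements merged into one kernel-verified Lean document; each statement's English description precedes it below -/
import Mathlib

section
/- Let γ ∈ [0,1), let P ∈ ℝ^{S×S} be a row-stochastic matrix with an irreducible, aperiodic chain having stationary distribution d (so dᵀP = dᵀ, d > 0 entrywise), and let D = diag(d). Then the matrix D(γP − I) satisfies xᵀD(γP − I)x < 0 for every nonzero x ∈ ℝ^S. -/
open Matrix

/-- For a row-stochastic `P` with strictly positive stationary distribution `d`
and `γ ∈ [0,1)`, the matrix `D(γP − I)` (with `D = diag d`) satisfies
`xᵀD(γP − I)x < 0` for every nonzero `x`. -/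
theorem td_matrix_negative_definite {S : ℕ} (P : Matrix (Fin S) (Fin S) ℝ)
    (d : Fin S → ℝ) (γ : ℝ)
    (hP : ∀ i j, 0 ≤ P i j) (hProw : ∀ i, ∑ j, P i j = 1)
    (hd : ∀ i, 0 < d i) (hdsum : ∑ i, d i = 1)
    (hstat : Matrix.vecMul d P = d)
    (hγ0 : 0 ≤ γ) (hγ1 : γ < 1) :
    ∀ x : Fin S → ℝ, x ≠ 0 →
      x ⬝ᵥ ((Matrix.diagonal d * (γ • P - 1)) *ᵥ x) < 0 := by
  intro x hx
  set y : Fin S → ℝ := P *ᵥ x with hy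
  set N : ℝ := ∑ i, d i * x i ^ 2 with hN
  -- N > 0
  have hNpos : 0 < N := by
    obtain ⟨i, hi⟩ : ∃ i, x i ≠ 0 := by
      by_contra h
      push_neg at h
      exact hx (funext h)
    refine Finset.sum_pos' (fun j _ => mul_nonneg (hd j).le (sq_nonneg _))
      ⟨i, Finset.mem_univ i, mul_pos (hd i) (by positivity)⟩
  -- Jensen: ∑ d i * y i ^ 2 ≤ N
  have hM : ∑ i, d i * y i ^ 2 ≤ N := by
    have step : ∀ i, y i ^ 2 ≤ ∑ j, P i j * x j ^ 2 := by
      intro i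
      have := Finset.sum_sq_le_sum_mul_sum_of_sq_eq_mul Finset.univ
        (r := fun j => P i j * x j) (f := fun j => P i j) (g := fun j => P i j * x j ^ 2)
        (fun j _ => hP i j) (fun j _ => mul_nonneg (hP i j) (sq_nonneg _))
        (fun j _ => by ring)
      simpa [hy, Matrix.mulVec, dotProduct, hProw i] using this
    calc ∑ i, d i * y i ^ 2 ≤ ∑ i, d i * ∑ j, P i j * x j ^ 2 := by
          apply Finset.sum_le_sum
          intro i _
          exact mul_le_mul_of_nonneg_left (step i) (hd i).le
      _ = ∑ j, (∑ i, d i * P i j) * x j ^ 2 := by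
          have h : ∀ i j, d i * (P i j * x j ^ 2) = d i * P i j * x j ^ 2 := by
            intros; ring
          simp_rw [Finset.mul_sum, Finset.sum_mul, h]
          exact Finset.sum_comm
      _ = N := by
          have : ∀ j, ∑ i, d i * P i j = d j := fun j => congrFun hstat j
          simp [hN, this]
  -- Cauchy-Schwarz: A := ∑ d i * x i * y i ≤ N
  have hA : ∑ i, d i * (x i * y i) ≤ N := by
    have hcs := Finset.sum_mul_sq_le_sq_mul_sq Finset.univ
      (fun i => Real.sqrt (d i) * x i) (fun i => Real.sqrt (d i) * y i)
    have hsq : ∀ i, Real.sqrt (d i) * x i * (Real.sqrt (d i) * y i) = d i * (x i * y i) := by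
      intro i
      rw [mul_mul_mul_comm, Real.mul_self_sqrt (hd i).le]
    have hsq2 : ∀ i, (Real.sqrt (d i) * x i) ^ 2 = d i * x i ^ 2 := by
      intro i
      rw [mul_pow, Real.sq_sqrt (hd i).le]
    have hsq3 : ∀ i, (Real.sqrt (d i) * y i) ^ 2 = d i * y i ^ 2 := by
      intro i
      rw [mul_pow, Real.sq_sqrt (hd i).le]
    simp only [hsq, hsq2, hsq3] at hcs
    -- hcs : (∑ d x y)^2 ≤ N * (∑ d y^2) ≤ N * N
    have h2 : (∑ i, d i * (x i * y i)) ^ 2 ≤ N ^ 2 := by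
      calc (∑ i, d i * (x i * y i)) ^ 2 ≤ N * ∑ i, d i * y i ^ 2 := hcs
        _ ≤ N * N := mul_le_mul_of_nonneg_left hM hNpos.le
        _ = N ^ 2 := (sq N).symm
    nlinarith [h2, hNpos]
  -- Now compute the quadratic form
  have hexpr : x ⬝ᵥ ((Matrix.diagonal d * (γ • P - 1)) *ᵥ x)
      = γ * (∑ i, d i * (x i * y i)) - N := by
    rw [← Matrix.mulVec_mulVec]
    simp only [Matrix.sub_mulVec, Matrix.smul_mulVec, Matrix.one_mulVec,
      Matrix.mulVec_diagonal, dotProduct]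
    simp only [Pi.sub_apply, Pi.smul_apply, smul_eq_mul, ← hy]
    rw [Finset.mul_sum, ← Finset.sum_sub_distrib]
    congr 1
    ext i
    ring
  rw [hexpr]
  have h1 : γ * (∑ i, d i * (x i * y i)) ≤ γ * N := mul_le_mul_of_nonneg_left hA hγ0
  nlinarith
end

section
/- Let x¹, …, x^n be real numbers held by cooperative agents and let an agent receive these values together with at most H arbitrary (adversarial) values. Suppose the agent removes the H largest and H smallest received values that are respectively larger and smaller than its own value x^i, and takes a convex combination (with weights summing to 1) of the remaining values together with x^i. Then the result lies in the closed interval [min_j x^j, max_j x^j] over the cooperative values. -/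
open Finset

/-- W-MSR trimming safety property. Cooperative values `x : Fin n → ℝ` (agent `i`
owns `x i`) are received together with at most `H` adversarial values
`a : Fin m → ℝ` (`m ≤ H`).  The agent removes a set `U` consisting of (at most,
and if anything above its own value remains, exactly) `H` largest received
values larger than `x i`, and a set `Lo` of `H` smallest received values smaller
than `x i`, and forms a convex combination of the remaining values.  The result
lies in `[min_j x j, max_j x j]`. -/
theorem wmsr_trimming_safety {n m H : ℕ} (hm : m ≤ H)
    (x : Fin n → ℝ) (a : Fin m → ℝ) (i : Fin n)
    (y : Fin n ⊕ Fin m → ℝ)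
    (hy : ∀ j, y (Sum.inl j) = x j) (hya : ∀ k, y (Sum.inr k) = a k)
    (U Lo : Finset (Fin n ⊕ Fin m))
    (hU : ∀ s ∈ U, x i < y s) (hUcard : U.card ≤ H)
    (hUtop : ∀ s ∈ U, ∀ t ∉ U, x i < y t → y t ≤ y s)
    (hUfull : ∀ t ∉ U, x i < y t → U.card = H)
    (hLo : ∀ s ∈ Lo, y s < x i) (hLocard : Lo.card ≤ H)
    (hLobot : ∀ s ∈ Lo, ∀ t ∉ Lo, y t < x i → y s ≤ y t)
    (hLofull : ∀ t ∉ Lo, y t < x i → Lo.card = H)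
    (w : Fin n ⊕ Fin m → ℝ)
    (hw0 : ∀ s, 0 ≤ w s)
    (hwsupp : ∀ s, w s ≠ 0 → s ∉ U ∧ s ∉ Lo)
    (hwsum : ∑ s, w s = 1) :
    Finset.univ.inf' ⟨i, Finset.mem_univ i⟩ x ≤ ∑ s, w s * y s ∧
      ∑ s, w s * y s ≤ Finset.univ.sup' ⟨i, Finset.mem_univ i⟩ x := by
  set lo := Finset.univ.inf' ⟨i, Finset.mem_univ i⟩ x with hloDef
  set hi := Finset.univ.sup' ⟨i, Finset.mem_univ i⟩ x with hhiDef
  have hlox : ∀ j, lo ≤ x j := fun j => Finset.inf'_le _ (Finset.mem_univ j)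
  have hxhi : ∀ j, x j ≤ hi := fun j => Finset.le_sup' _ (Finset.mem_univ j)
  have key_hi : ∀ s, s ∉ U → y s ≤ hi := by
    intro s hs
    by_contra hgt
    push_neg at hgt
    have hxi : x i < y s := lt_of_le_of_lt (hxhi i) hgt
    have hUH : U.card = H := hUfull s hs hxi
    have hall : ∀ t ∈ insert s U, hi < y t := by
      intro t ht
      rcases Finset.mem_insert.mp ht with rfl | ht
      · exact hgt
      · exact lt_of_lt_of_le hgt (hUtop t ht s hs hxi)
    have hsU : s ∉ U := hs
    have hinr : insert s U ⊆ Finset.univ.image Sum.inr := by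
      intro t ht
      rcases t with j | k
      · exact absurd (hall _ ht) (not_lt.mpr (by rw [hy j]; exact hxhi j))
      · exact Finset.mem_image.mpr ⟨k, Finset.mem_univ k, rfl⟩
    have h1 : (insert s U).card = H + 1 := by
      rw [Finset.card_insert_of_notMem hsU, hUH]
    have h2 : (insert s U).card ≤ m := by
      calc (insert s U).card ≤ _ := Finset.card_le_card hinr
        _ = m := by
          rw [Finset.card_image_of_injective _ Sum.inr_injective, Finset.card_univ,
            Fintype.card_fin]
    omega
  have key_lo : ∀ s, s ∉ Lo → lo ≤ y s := by
    intro s hs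
    by_contra hlt
    push_neg at hlt
    have hxi : y s < x i := lt_of_lt_of_le hlt (hlox i)
    have hLoH : Lo.card = H := hLofull s hs hxi
    have hall : ∀ t ∈ insert s Lo, y t < lo := by
      intro t ht
      rcases Finset.mem_insert.mp ht with rfl | ht
      · exact hlt
      · exact lt_of_le_of_lt (hLobot t ht s hs hxi) hlt
    have hsLo : s ∉ Lo := hs
    have hinr : insert s Lo ⊆ Finset.univ.image Sum.inr := by
      intro t ht
      rcases t with j | k
      · exact absurd (hall _ ht) (not_lt.mpr (by rw [hy j]; exact hlox j))
      · exact Finset.mem_image.mpr ⟨k, Finset.mem_univ k, rfl⟩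
    have h1 : (insert s Lo).card = H + 1 := by
      rw [Finset.card_insert_of_notMem hsLo, hLoH]
    have h2 : (insert s Lo).card ≤ m := by
      calc (insert s Lo).card ≤ _ := Finset.card_le_card hinr
        _ = m := by
          rw [Finset.card_image_of_injective _ Sum.inr_injective, Finset.card_univ,
            Fintype.card_fin]
    omega
  constructor
  · calc lo = ∑ s, w s * lo := by rw [← Finset.sum_mul, hwsum, one_mul]
      _ ≤ ∑ s, w s * y s := Finset.sum_le_sum (fun s _ => by
          by_cases h : w s = 0
          · simp [h]
          · exact mul_le_mul_of_nonneg_left (key_lo s (hwsupp s h).2) (hw0 s))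
  · calc ∑ s, w s * y s ≤ ∑ s, w s * hi := Finset.sum_le_sum (fun s _ => by
          by_cases h : w s = 0
          · simp [h]
          · exact mul_le_mul_of_nonneg_left (key_hi s (hwsupp s h).1) (hw0 s))
      _ = hi := by rw [← Finset.sum_mul, hwsum, one_mul]
end

section
/- Let M ∈ ℝ^{n×n} be a symmetric positive semidefinite matrix with spectral radius ρ < 1, and let {x_t} be a sequence in ℝ^n such that ‖x_{t+1}‖² ≤ ρ·‖(I + α_t A_t)x_t + α_t b_t‖², where ‖A_t‖ ≤ K₁ and ‖b_t‖ ≤ K_b uniformly, α_t > 0, α_t → 0, and α_t/α_{t+1} → 1. Then the rescaled sequence y_t = x_t/α_t is bounded: sup_t ‖y_t‖ < ∞. -/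
open Matrix Filter

/-- Abstract boundedness argument of Lemmas 4 and 10: if
`‖x_{t+1}‖² ≤ ρ‖(I + α_t A_t)x_t + α_t b_t‖²` with `ρ < 1`, `‖A_t‖ ≤ K₁`,
`‖b_t‖ ≤ K_b`, `α_t > 0`, `α_t → 0`, and `α_t/α_{t+1} → 1`, then the rescaled
sequence `y_t = x_t/α_t` is uniformly bounded. -/
theorem rescaled_sequence_bounded {n : ℕ}
    (x : ℕ → Fin n → ℝ) (A : ℕ → Matrix (Fin n) (Fin n) ℝ)
    (b : ℕ → Fin n → ℝ) (α : ℕ → ℝ) (ρ K₁ Kb : ℝ)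
    (hρ0 : 0 ≤ ρ) (hρ1 : ρ < 1) (hK₁ : 0 ≤ K₁) (hKb : 0 ≤ Kb)
    (hα : ∀ t, 0 < α t)
    (hα0 : Tendsto α atTop (nhds 0))
    (hαratio : Tendsto (fun t => α t / α (t + 1)) atTop (nhds 1))
    (hA : ∀ t (v : Fin n → ℝ),
      Real.sqrt ((A t *ᵥ v) ⬝ᵥ (A t *ᵥ v)) ≤ K₁ * Real.sqrt (v ⬝ᵥ v))
    (hb : ∀ t, Real.sqrt (b t ⬝ᵥ b t) ≤ Kb)
    (hrec : ∀ t, x (t + 1) ⬝ᵥ x (t + 1) ≤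
      ρ * ((((1 + α t • A t) *ᵥ x t) + α t • b t) ⬝ᵥ
           (((1 + α t • A t) *ᵥ x t) + α t • b t))) :
    ∃ B : ℝ, ∀ t, Real.sqrt (x t ⬝ᵥ x t) / α t ≤ B := by
  classical
  set N : (Fin n → ℝ) → ℝ := fun v => ‖(WithLp.equiv 2 (Fin n → ℝ)).symm v‖ with hNdef
  have hNdot : ∀ v : Fin n → ℝ, Real.sqrt (v ⬝ᵥ v) = N v := by
    intro v
    show Real.sqrt (v ⬝ᵥ v) = ‖(WithLp.equiv 2 (Fin n → ℝ)).symm v‖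
    rw [EuclideanSpace.norm_eq]
    congr 1
    simp [dotProduct, Real.norm_eq_abs, sq_abs, sq]
  have hNnonneg : ∀ v, 0 ≤ N v := fun v => norm_nonneg _
  set s := Real.sqrt ρ with hsdef
  have hs0 : 0 ≤ s := Real.sqrt_nonneg _
  have hs1 : s < 1 := by
    rw [hsdef, show (1:ℝ) = Real.sqrt 1 by simp]
    exact Real.sqrt_lt_sqrt hρ0 (by linarith)
  -- Step bound
  have hstep : ∀ t, N (x (t + 1)) ≤ s * ((1 + α t * K₁) * N (x t) + α t * Kb) := by
    intro t
    have h1 : Real.sqrt (x (t + 1) ⬝ᵥ x (t + 1)) ≤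
        Real.sqrt (ρ * ((((1 + α t • A t) *ᵥ x t) + α t • b t) ⬝ᵥ
          (((1 + α t • A t) *ᵥ x t) + α t • b t))) :=
      Real.sqrt_le_sqrt (hrec t)
    rw [Real.sqrt_mul hρ0, hNdot, hNdot] at h1
    refine h1.trans ?_
    apply mul_le_mul_of_nonneg_left _ hs0
    have hsplit : (1 + α t • A t) *ᵥ x t = x t + α t • (A t *ᵥ x t) := by
      rw [Matrix.add_mulVec, Matrix.one_mulVec, Matrix.smul_mulVec]
    calc N ((1 + α t • A t) *ᵥ x t + α t • b t)
        ≤ N ((1 + α t • A t) *ᵥ x t) + N (α t • b t) := by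
          rw [hNdef]; simp only [WithLp.equiv_symm_apply, WithLp.toLp_add]; exact norm_add_le _ _
      _ ≤ (N (x t) + α t * N (A t *ᵥ x t)) + α t * N (b t) := by
          gcongr
          · rw [hsplit, hNdef]
            simp only [WithLp.equiv_symm_apply, WithLp.toLp_add, WithLp.toLp_smul]
            refine (norm_add_le _ _).trans ?_
            rw [norm_smul, Real.norm_eq_abs, abs_of_pos (hα t)]
          · rw [hNdef]
            simp only [WithLp.equiv_symm_apply, WithLp.toLp_smul]
            rw [norm_smul, Real.norm_eq_abs, abs_of_pos (hα t)]
      _ ≤ (1 + α t * K₁) * N (x t) + α t * Kb := by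
          have hA' : N (A t *ᵥ x t) ≤ K₁ * N (x t) := by
            rw [← hNdot, ← hNdot]; exact hA t (x t)
          have hb' : N (b t) ≤ Kb := by rw [← hNdot]; exact hb t
          have h2 : α t * N (A t *ᵥ x t) ≤ α t * (K₁ * N (x t)) :=
            mul_le_mul_of_nonneg_left hA' (hα t).le
          have h3 : α t * N (b t) ≤ α t * Kb :=
            mul_le_mul_of_nonneg_left hb' (hα t).le
          nlinarith [hNnonneg (x t)]
  set q := (1 + s) / 2 with hqdef
  have hsq : s < q := by rw [hqdef]; linarith
  have hq1 : q < 1 := by rw [hqdef]; linarith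
  have hq0 : 0 ≤ q := by rw [hqdef]; linarith
  -- eventual contraction
  have hf : Tendsto (fun t => s * (α t / α (t + 1)) * (1 + α t * K₁)) atTop
      (nhds (s * 1 * (1 + 0 * K₁))) := by
    exact (tendsto_const_nhds.mul hαratio).mul
      (tendsto_const_nhds.add (hα0.mul tendsto_const_nhds))
  have hf' : Tendsto (fun t => s * (α t / α (t + 1)) * (1 + α t * K₁)) atTop (nhds s) := by
    simpa using hf
  have hg : Tendsto (fun t => s * (α t / α (t + 1))) atTop (nhds s) := by
    simpa using tendsto_const_nhds.mul hαratio
  have hev1 := hf'.eventually_lt_const hsq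
  have hev2 := hg.eventually_lt_const (show s < 2 by linarith)
  obtain ⟨T, hT⟩ := (hev1.and hev2).exists_forall_of_atTop
  set y : ℕ → ℝ := fun t => N (x t) / α t with hydef
  have hynn : ∀ t, 0 ≤ y t := fun t => div_nonneg (hNnonneg _) (hα t).le
  have hkey : ∀ t, T ≤ t → y (t + 1) ≤ q * y t + 2 * Kb := by
    intro t ht
    obtain ⟨h1, h2⟩ := hT t ht
    have hα' := hα (t + 1)
    have hαt := hα t
    have hdiv : y (t + 1) ≤ s * ((1 + α t * K₁) * N (x t) + α t * Kb) / α (t + 1) := by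
      exact div_le_div_of_nonneg_right (hstep t) hα'.le |>.trans_eq rfl
    have heq : s * ((1 + α t * K₁) * N (x t) + α t * Kb) / α (t + 1)
        = (s * (α t / α (t + 1)) * (1 + α t * K₁)) * y t + (s * (α t / α (t + 1))) * Kb := by
      rw [hydef]
      field_simp
    rw [heq] at hdiv
    refine hdiv.trans ?_
    have t1 : (s * (α t / α (t + 1)) * (1 + α t * K₁)) * y t ≤ q * y t :=
      mul_le_mul_of_nonneg_right h1.le (hynn t)
    have t2 : (s * (α t / α (t + 1))) * Kb ≤ 2 * Kb :=
      mul_le_mul_of_nonneg_right h2.le hKb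
    linarith
  set C := max (y T) (2 * Kb / (1 - q)) with hCdef
  have hCy : ∀ k, y (T + k) ≤ C := by
    intro k
    induction k with
    | zero => exact le_max_left _ _
    | succ k ih =>
      have h := hkey (T + k) (Nat.le_add_right _ _)
      have hC2 : 2 * Kb / (1 - q) ≤ C := le_max_right _ _
      have h1q : (0:ℝ) < 1 - q := by linarith
      have : 2 * Kb ≤ (1 - q) * C := by
        rw [div_le_iff₀ h1q] at hC2; linarith
      have : q * y (T + k) + 2 * Kb ≤ q * C + (1 - q) * C := by
        have := mul_le_mul_of_nonneg_left ih hq0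
        linarith
      calc y (T + k + 1) ≤ q * y (T + k) + 2 * Kb := h
        _ ≤ q * C + (1 - q) * C := this
        _ = C := by ring
  refine ⟨max C ((Finset.range (T + 1)).sup' ⟨0, by simp⟩ y), fun t => ?_⟩
  rw [hNdot]
  show y t ≤ _
  rcases le_or_gt t T with h | h
  · exact le_trans (Finset.le_sup' y (Finset.mem_range.mpr (by omega))) (le_max_right _ _)
  · have : t = T + (t - T) := by omega
    rw [this]
    exact le_trans (hCy (t - T)) (le_max_left _ _)
end

section
/- Let γ ∈ [0,1), P row-stochastic with positive stationary distribution d, D = diag(d), Φ ∈ ℝ^{S×L} full column rank, and R ∈ ℝ^S. Then the equation ΦᵀD(R + γPΦv − Φv) = 0 has a unique solution v ∈ ℝ^L, namely v = (ΦᵀD(I − γP)Φ)^{-1}ΦᵀDR, because the matrix ΦᵀD(I − γP)Φ is invertible. -/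
open Matrix

lemma td_quad_pos {S : ℕ} (P : Matrix (Fin S) (Fin S) ℝ) (d : Fin S → ℝ) (γ : ℝ)
    (hP : ∀ i j, 0 ≤ P i j) (hProw : ∀ i, ∑ j, P i j = 1)
    (hd : ∀ i, 0 < d i) (hstat : Matrix.vecMul d P = d)
    (hγ0 : 0 ≤ γ) (hγ1 : γ < 1) (y : Fin S → ℝ) (hy : y ≠ 0) :
    0 < ∑ i, d i * y i * (y i - γ * (P *ᵥ y) i) := by
  set z : Fin S → ℝ := P *ᵥ y with hz
  set A : ℝ := ∑ i, d i * y i ^ 2 with hA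
  set B : ℝ := ∑ i, d i * y i * z i with hB
  set C : ℝ := ∑ i, d i * z i ^ 2 with hC
  have hzdef : ∀ i, z i = ∑ j, P i j * y j := by
    intro i; simp [hz, Matrix.mulVec, dotProduct]
  have hApos : 0 < A := by
    obtain ⟨i, hi⟩ := Function.ne_iff.mp hy
    have hi' : y i ≠ 0 := hi
    have hyi : 0 < y i ^ 2 := by
      rcases lt_or_gt_of_ne hi' with h | h <;> nlinarith
    apply Finset.sum_pos' (fun j _ => mul_nonneg (hd j).le (sq_nonneg _))
    exact ⟨i, Finset.mem_univ i, mul_pos (hd i) hyi⟩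
  have hCnn : 0 ≤ C := Finset.sum_nonneg fun i _ => mul_nonneg (hd i).le (sq_nonneg _)
  -- Jensen per row: z i ^ 2 ≤ ∑ j, P i j * y j ^ 2
  have hrow : ∀ i, z i ^ 2 ≤ ∑ j, P i j * y j ^ 2 := by
    intro i
    have hcs := Finset.sum_mul_sq_le_sq_mul_sq Finset.univ
      (fun j => Real.sqrt (P i j)) (fun j => Real.sqrt (P i j) * y j)
    have h1 : ∀ j, Real.sqrt (P i j) * (Real.sqrt (P i j) * y j) = P i j * y j := by
      intro j; rw [← mul_assoc, Real.mul_self_sqrt (hP i j)]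
    have h3 : ∀ j, (Real.sqrt (P i j) * y j) ^ 2 = P i j * y j ^ 2 := by
      intro j; rw [mul_pow, Real.sq_sqrt (hP i j)]
    simp only [h1, Real.sq_sqrt (hP i _), h3, hProw i, one_mul] at hcs
    rw [hzdef i]
    exact hcs
  have hcol : ∀ j, ∑ i, d i * P i j = d j := by
    intro j
    have := congrFun hstat j
    simpa [Matrix.vecMul, dotProduct] using this
  have hCA : C ≤ A := by
    calc C ≤ ∑ i, d i * ∑ j, P i j * y j ^ 2 :=
          Finset.sum_le_sum fun i _ =>
            mul_le_mul_of_nonneg_left (hrow i) (hd i).le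
      _ = ∑ i, ∑ j, d i * P i j * y j ^ 2 := by
          simp [Finset.mul_sum, mul_assoc]
      _ = ∑ j, ∑ i, d i * P i j * y j ^ 2 := Finset.sum_comm
      _ = ∑ j, (∑ i, d i * P i j) * y j ^ 2 := by
          simp [Finset.sum_mul]
      _ = A := by simp [hcol, hA]
  have hB2 : B ^ 2 ≤ A * C := by
    have hcs := Finset.sum_mul_sq_le_sq_mul_sq Finset.univ
      (fun i => Real.sqrt (d i) * y i) (fun i => Real.sqrt (d i) * z i)
    have h1 : ∀ i, (Real.sqrt (d i) * y i) * (Real.sqrt (d i) * z i) = d i * y i * z i := by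
      intro i
      calc (Real.sqrt (d i) * y i) * (Real.sqrt (d i) * z i)
          = (Real.sqrt (d i) * Real.sqrt (d i)) * (y i * z i) := by ring
        _ = d i * y i * z i := by rw [Real.mul_self_sqrt (hd i).le]; ring
    have h2 : ∀ i, (Real.sqrt (d i) * y i) ^ 2 = d i * y i ^ 2 := by
      intro i; rw [mul_pow, Real.sq_sqrt (hd i).le]
    have h3 : ∀ i, (Real.sqrt (d i) * z i) ^ 2 = d i * z i ^ 2 := by
      intro i; rw [mul_pow, Real.sq_sqrt (hd i).le]
    simp only [h1, h2, h3] at hcs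
    exact hcs
  have hBA : B ≤ A := by nlinarith [hB2, hCA, hApos, hCnn]
  have expand : ∑ i, d i * y i * (y i - γ * z i) = A - γ * B := by
    rw [hA, hB, Finset.mul_sum, ← Finset.sum_sub_distrib]
    exact Finset.sum_congr rfl fun i _ => by ring
  rw [expand]
  nlinarith [mul_le_mul_of_nonneg_left hBA hγ0,
    mul_pos (show (0:ℝ) < 1 - γ by linarith) hApos]

/-- TD(0) fixed point (Theorem 1): with `γ ∈ [0,1)`, `P` row-stochastic with
strictly positive stationary distribution `d`, `D = diag d`, and `Φ` of full
column rank, the matrix `ΦᵀD(I − γP)Φ` is invertible and the equation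
`ΦᵀD(R + γPΦv − Φv) = 0` has the unique solution
`v = (ΦᵀD(I − γP)Φ)⁻¹ΦᵀDR`. -/
theorem td_fixed_point_unique {S L : ℕ} (Φ : Matrix (Fin S) (Fin L) ℝ)
    (P : Matrix (Fin S) (Fin S) ℝ) (d : Fin S → ℝ) (γ : ℝ) (R : Fin S → ℝ)
    (hP : ∀ i j, 0 ≤ P i j) (hProw : ∀ i, ∑ j, P i j = 1)
    (hd : ∀ i, 0 < d i) (hdsum : ∑ i, d i = 1)
    (hstat : Matrix.vecMul d P = d)
    (hγ0 : 0 ≤ γ) (hγ1 : γ < 1)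
    (hΦ : ∀ x : Fin L → ℝ, Φ *ᵥ x = 0 → x = 0) :
    letI D : Matrix (Fin S) (Fin S) ℝ := Matrix.diagonal d
    letI M : Matrix (Fin L) (Fin L) ℝ := Φᵀ * D * (1 - γ • P) * Φ
    IsUnit M ∧
    letI v : Fin L → ℝ := M⁻¹ *ᵥ ((Φᵀ * D) *ᵥ R)
    ((Φᵀ * D) *ᵥ (R + γ • (P *ᵥ (Φ *ᵥ v)) - Φ *ᵥ v) = 0) ∧
    (∀ v' : Fin L → ℝ,
      (Φᵀ * D) *ᵥ (R + γ • (P *ᵥ (Φ *ᵥ v')) - Φ *ᵥ v') = 0 → v' = v) := by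
  set D : Matrix (Fin S) (Fin S) ℝ := Matrix.diagonal d with hD
  set M : Matrix (Fin L) (Fin L) ℝ := Φᵀ * D * (1 - γ • P) * Φ with hMdef
  -- quadratic form identity
  have hquad : ∀ x : Fin L → ℝ, x ⬝ᵥ (M *ᵥ x) =
      ∑ i, d i * (Φ *ᵥ x) i * ((Φ *ᵥ x) i - γ * (P *ᵥ (Φ *ᵥ x)) i) := by
    intro x
    have h1 : M *ᵥ x = Φᵀ *ᵥ (D *ᵥ ((1 - γ • P) *ᵥ (Φ *ᵥ x))) := by
      simp [hMdef, Matrix.mulVec_mulVec, Matrix.mul_assoc]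
    rw [h1, Matrix.dotProduct_mulVec, Matrix.vecMul_transpose]
    set y : Fin S → ℝ := Φ *ᵥ x with hy
    have h2 : (1 - γ • P) *ᵥ y = y - γ • (P *ᵥ y) := by
      rw [Matrix.sub_mulVec, Matrix.one_mulVec, Matrix.smul_mulVec]
    rw [h2]
    simp only [hD, dotProduct, Matrix.mulVec_diagonal, Pi.sub_apply, Pi.smul_apply,
      smul_eq_mul]
    exact Finset.sum_congr rfl fun i _ => by ring
  -- kernel triviality
  have hker : ∀ x : Fin L → ℝ, M *ᵥ x = 0 → x = 0 := by
    intro x hx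
    by_contra hxne
    have hyne : Φ *ᵥ x ≠ 0 := fun h => hxne (hΦ x h)
    have hpos := td_quad_pos P d γ hP hProw hd hstat hγ0 hγ1 (Φ *ᵥ x) hyne
    have h0 : x ⬝ᵥ (M *ᵥ x) = 0 := by rw [hx, dotProduct_zero]
    rw [hquad x] at h0
    linarith
  have hdet : M.det ≠ 0 := by
    intro h
    obtain ⟨w, hw0, hww⟩ := Matrix.exists_mulVec_eq_zero_iff.mpr h
    exact hw0 (hker w hww)
  have hU : IsUnit M := (Matrix.isUnit_iff_isUnit_det M).mpr (isUnit_iff_ne_zero.mpr hdet)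
  have hMinv : M * M⁻¹ = 1 := Matrix.mul_nonsing_inv M (isUnit_iff_ne_zero.mpr hdet)
  -- rewrite of the TD equation
  have hrw : ∀ u : Fin L → ℝ,
      (Φᵀ * D) *ᵥ (R + γ • (P *ᵥ (Φ *ᵥ u)) - Φ *ᵥ u)
        = (Φᵀ * D) *ᵥ R - M *ᵥ u := by
    intro u
    have h1 : R + γ • (P *ᵥ (Φ *ᵥ u)) - Φ *ᵥ u
        = R - ((1 - γ • P) *ᵥ (Φ *ᵥ u)) := by
      rw [Matrix.sub_mulVec, Matrix.one_mulVec, Matrix.smul_mulVec]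
      funext i
      simp only [Pi.add_apply, Pi.sub_apply, Pi.smul_apply, smul_eq_mul]
      ring
    rw [h1, Matrix.mulVec_sub]
    congr 1
    simp [hMdef, Matrix.mulVec_mulVec, Matrix.mul_assoc]
  refine ⟨hU, ?_, ?_⟩
  · rw [hrw, Matrix.mulVec_mulVec, hMinv, Matrix.one_mulVec, sub_self]
  · intro v' hv'
    rw [hrw] at hv'
    have hMv' : M *ᵥ v' = (Φᵀ * D) *ᵥ R := by
      have := sub_eq_zero.mp hv'
      exact this.symm
    have hMv : M *ᵥ (M⁻¹ *ᵥ ((Φᵀ * D) *ᵥ R)) = (Φᵀ * D) *ᵥ R := by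
      rw [Matrix.mulVec_mulVec, hMinv, Matrix.one_mulVec]
    have hdiff : M *ᵥ (v' - M⁻¹ *ᵥ ((Φᵀ * D) *ᵥ R)) = 0 := by
      rw [Matrix.mulVec_sub, hMv', hMv, sub_self]
    have := hker _ hdiff
    exact sub_eq_zero.mp this
end
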